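/- arXiv:2105.06425 — 3 statements merged into one kernel-verified Lean document; each statement's English description precedes it below -/
import Mathlib

section
/- Let k be an algebraically closed field of characteristic 2, and let K = k((t)) with valuation ring R = k[[t]]. Then the map Φ : K × K → K, Φ(u,v) = u² + v + t·v², is surjective. Equivalently, every element f ∈ K can be written as u² + v + t v² for some u, v ∈ K. -/
/-!
Since squaring is additive in characteristic 2, so is `Φ(u, v) = u² + v + t v²`; its image is a
subgroup, and subtracting the finitely many polar terms of `f` one at a time reduces to power
series and monomials `c tⁿ`. Power series are values of `v ↦ v + t v²` by Hensel's lemma.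
Since `k` is algebraically closed, `c t⁻²ᵐ = (√c t⁻ᵐ)²`, `c t⁻¹ = Φ(0, b t⁻¹)` for a root of
`b + b² = c`, and for `m ≥ 1`, `Φ(0, √c t⁻ᵐ) = √c t⁻ᵐ + c t⁻²ᵐ⁻¹` trades the pole of order
`2m + 1` for one of order `m`.
-/

open HahnSeries PowerSeries

theorem PowerSeries.exists_add_X_mul_sq_eq {R : Type*} [CommRing R] (g : R⟦X⟧) :
    ∃ v : R⟦X⟧, v + X * v ^ 2 = g := by
  -- Hensel applies to the monic `Y² + Y - X g`, whose root `w ≡ 0 mod X` is `X v`.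
  set P : Polynomial R⟦X⟧ :=
    Polynomial.X ^ 2 + Polynomial.X - Polynomial.C (X * g) with hP
  have hmonic : P.Monic := by rw [hP]; monicity!
  obtain ⟨w, hw, hwX⟩ := HenselianRing.is_henselian (I := Ideal.span {X}) P hmonic 0
    (by simp [hP, Ideal.mem_span_singleton])
    (by simp [hP])
  obtain ⟨v, rfl⟩ := Ideal.mem_span_singleton.mp (by simpa using hwX)
  refine ⟨v, X_mul_cancel ?_⟩
  have : (X * v) ^ 2 + X * v - X * g = 0 := by simpa [hP] using hw
  linear_combination this

theorem IsAlgClosed.exists_add_sq_eq {k : Type*} [Field k] [IsAlgClosed k] (c : k) :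
    ∃ b : k, b + b ^ 2 = c := by
  have hdeg : (Polynomial.X ^ 2 + Polynomial.X - Polynomial.C c).degree = 2 := by
    compute_degree!
  obtain ⟨b, hb⟩ := IsAlgClosed.exists_root _ (hdeg ▸ two_ne_zero)
  exact ⟨b, by simpa [sub_eq_zero, add_comm] using hb⟩

instance HahnSeries.instCharP {Γ R : Type*} [AddCommMonoid Γ] [PartialOrder Γ]
    [IsOrderedCancelAddMonoid Γ] [NonAssocSemiring R] (p : ℕ) [CharP R p] :
    CharP (HahnSeries Γ R) p :=
  charP_of_injective_ringHom C_injective p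

section Phi

variable {A : Type*} [CommRing A] [CharP A 2]

def phi (t : A) : A × A →+ A where
  toFun x := x.1 ^ 2 + x.2 + t * x.2 ^ 2
  map_zero' := by simp
  map_add' x y := by
    simp only [Prod.fst_add, Prod.snd_add, CharTwo.add_sq]
    ring

@[simp]
theorem phi_apply (t : A) (x : A × A) : phi t x = x.1 ^ 2 + x.2 + t * x.2 ^ 2 := rfl

end Phi

namespace LaurentSeries

variable {k : Type*}

theorem ofPowerSeries_mem_range_phi [CommRing k] [CharP k 2] (g : k⟦X⟧) :
    ofPowerSeries ℤ k g ∈ (phi (single 1 1 : k⸨X⸩)).range := by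
  obtain ⟨v, hv⟩ := exists_add_X_mul_sq_eq g
  refine ⟨(0, ofPowerSeries ℤ k v), ?_⟩
  simp [← hv, ← ofPowerSeries_X]

variable [Field k] [CharP k 2]

theorem mem_range_phi_of_coeff_neg_eq_zero {f : k⸨X⸩} (hf : ∀ n < 0, f.coeff n = 0) :
    f ∈ (phi (single 1 1 : k⸨X⸩)).range := by
  obtain ⟨g, rfl⟩ := (val_le_one_iff_eq_coe k f).mp <|
    (valuation_le_iff_coeff_lt_log_eq_zero k one_ne_zero).mpr (by simpa using hf)
  exact ofPowerSeries_mem_range_phi g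

variable [IsAlgClosed k]

theorem single_mem_range_phi (n : ℤ) (c : k) :
    single n c ∈ (phi (single 1 1 : k⸨X⸩)).range := by
  obtain ⟨a, ha⟩ := IsAlgClosed.exists_pow_nat_eq c two_pos
  rcases le_or_gt 0 n with hn | hn
  · exact mem_range_phi_of_coeff_neg_eq_zero fun m hm ↦ coeff_single_of_ne (by omega)
  obtain ⟨m, rfl | rfl⟩ := Int.even_or_odd' n
  · refine ⟨(single m a, 0), ?_⟩
    simp [single_pow, ha, two_mul]
  rcases lt_or_eq_of_le (show m ≤ -1 by omega) with hm | rfl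
  · have hsum : single m a + single (2 * m + 1) c ∈ (phi (single 1 1 : k⸨X⸩)).range :=
      ⟨(0, single m a), by simp [single_pow, ha, single_mul_single, two_mul, add_comm (1 : ℤ)]⟩
    simpa using sub_mem hsum (single_mem_range_phi m a)
  · obtain ⟨b, hb⟩ := IsAlgClosed.exists_add_sq_eq c
    refine ⟨(0, single (-1) b), ?_⟩
    simp [single_pow, single_mul_single, ← hb]
termination_by (-n).toNat
decreasing_by omega

theorem mem_range_phi_of_coeff_lt_eq_zero (d : ℤ) {f : k⸨X⸩} (hf : ∀ n < d, f.coeff n = 0) :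
    f ∈ (phi (single 1 1 : k⸨X⸩)).range := by
  rcases le_or_gt 0 d with hd | hd
  · exact mem_range_phi_of_coeff_neg_eq_zero fun n hn ↦ hf n (by omega)
  have hrest : f - single d (f.coeff d) ∈ (phi (single 1 1 : k⸨X⸩)).range := by
    refine mem_range_phi_of_coeff_lt_eq_zero (d + 1) fun n hn ↦ ?_
    rcases lt_or_eq_of_le (Int.lt_add_one_iff.mp hn) with hn | rfl
    · simp [hf n hn, coeff_single_of_ne hn.ne]
    · simp
  simpa using add_mem hrest (single_mem_range_phi d (f.coeff d))
termination_by (-d).toNat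
decreasing_by omega

theorem phi_surjective : Function.Surjective (phi (single 1 1 : k⸨X⸩)) := fun f ↦
  mem_range_phi_of_coeff_lt_eq_zero f.order fun _ ↦ coeff_eq_zero_of_lt_order

end LaurentSeries

/-- Let `k` be an algebraically closed field of characteristic `2` and `K = k((t))` the
field of formal Laurent series.  Then the map `Φ(u,v) = u² + v + t v²` from `K × K` to
`K` is surjective: every `f ∈ K` can be written as `u² + v + t v²`. -/
theorem stmt1 (k : Type*) [Field k] [IsAlgClosed k] [CharP k 2]
    (f : LaurentSeries k) :
    ∃ u v : LaurentSeries k,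
      u ^ 2 + v + (HahnSeries.single (1 : ℤ) (1 : k)) * v ^ 2 = f := by
  obtain ⟨⟨u, v⟩, h⟩ := LaurentSeries.phi_surjective f
  exact ⟨u, v, h⟩
end

section
/- Let V be a finite-dimensional vector space over an algebraically closed field k of characteristic p, and let φ : V → V be a p^k-semilinear map (φ(λx) = λ^{p^k} φ(x), additive). Decompose V = V_ss ⊕ V_nil where φ is bijective on V_ss and nilpotent on V_nil. Then φ − id is surjective on V, and ker(φ − id) is an F_{p^k}-vector space of dimension equal to dim_k V_ss. -/
/-!
Over an algebraically closed field every injective `q`-semilinear map `ψ` has a nonzero fixed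
vector: along the orbit `u, ψ u, ψ² u, …` of any `u ≠ 0` take the first linear relation
`ψ^(m+1) u = ∑ cᵢ ψⁱ u`; then `∑ aᵢ ψⁱ u` is fixed as soon as the `aᵢ` obey a recursion driven by
`t = a_m`, and that recursion closes up when `t` is a root of a nonconstant polynomial in the `cᵢ`.
Dividing by the line of a fixed vector `v`, on which `ψ` acts as `a • v ↦ a ^ q • v`, and
inducting on the dimension reduces both claims to that line, where they are the facts that
`a ↦ a ^ q - a` is onto and that `X ^ q - X` has exactly `q` roots. On the nilpotent part,
`φ - id` is invertible (a finite geometric series) and has no fixed points.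
-/

open Function Finset Module Polynomial Submodule

section AlgClosed

variable {k : Type*} [Field k] [IsAlgClosed k]

theorem exists_pow_sub_self_eq {n : ℕ} (hn : 2 ≤ n) (e : k) : ∃ a : k, a ^ n - a = e := by
  have hdeg : (X ^ n - X - C e : k[X]).degree = n := by
    rw [sub_sub, degree_sub_eq_left_of_degree_lt, degree_X_pow]
    rw [degree_X_pow, degree_X_add_C]
    exact_mod_cast hn
  obtain ⟨a, ha⟩ := IsAlgClosed.exists_root _ (by rw [hdeg]; exact_mod_cast (by omega : n ≠ 0))
  exact ⟨a, by simpa [sub_eq_zero] using ha⟩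

theorem card_pow_eq_self (p : ℕ) [CharP k p] {n : ℕ} (hpn : p ∣ n) (hn : 1 < n) :
    Nat.card {a : k // a ^ n = a} = n := by
  have hne : (X ^ n - X : k[X]) ≠ 0 := FiniteField.X_pow_card_sub_X_ne_zero k hn
  have hroots : {a : k // a ^ n = a} ≃ (X ^ n - X : k[X]).rootSet k :=
    Equiv.subtypeEquivRight fun a => by simp [mem_rootSet, hne, sub_eq_zero]
  rw [Nat.card_congr hroots, Nat.card_eq_fintype_card,
    card_rootSet_eq_natDegree (galois_poly_separable p n hpn) (IsAlgClosed.splits _),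
    FiniteField.X_pow_card_sub_X_natDegree_eq k hn]

theorem exists_ne_zero_sum_mul_pow_eq_self {ι : Type*} (s : Finset ι) (e : ι → k) (m : ι → ℕ)
    (hm : Set.InjOn m s) (hm1 : ∀ i ∈ s, 1 < m i) (he : ∃ i ∈ s, e i ≠ 0) :
    ∃ t ≠ 0, ∑ i ∈ s, e i * t ^ m i = t := by
  classical
  obtain ⟨i₀, hi₀, he₀⟩ := he
  set h : k[X] := ∑ i ∈ s, C (e i) * X ^ (m i - 1) - 1
  have hcoeff : h.coeff (m i₀ - 1) = e i₀ := by
    have hpos := hm1 i₀ hi₀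
    simp only [h, coeff_sub, finsetSum_coeff, coeff_C_mul_X_pow, coeff_one]
    rw [sum_eq_single_of_mem i₀ hi₀ fun j hj hji => if_neg fun hj' =>
      hji (hm hj hi₀ (by have := hm1 j hj; omega)), if_pos rfl, if_neg (by omega), sub_zero]
  have hdeg : h.degree ≠ 0 := fun h0 => by
    have hle := le_natDegree_of_ne_zero (hcoeff ▸ he₀)
    rw [natDegree_eq_zero_iff_degree_le_zero.mpr h0.le] at hle
    have := hm1 i₀ hi₀
    omega
  obtain ⟨t, ht⟩ := IsAlgClosed.exists_root h hdeg
  have heval : ∑ i ∈ s, e i * t ^ (m i - 1) = 1 := by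
    simpa [h, eval_finsetSum, sub_eq_zero] using ht
  refine ⟨t, fun ht0 => ?_, ?_⟩
  · rw [ht0, sum_eq_zero fun i hi => by rw [zero_pow (by have := hm1 i hi; omega), mul_zero]]
      at heval
    exact zero_ne_one heval
  · calc ∑ i ∈ s, e i * t ^ m i = t * ∑ i ∈ s, e i * t ^ (m i - 1) := by
          rw [mul_sum]
          refine sum_congr rfl fun i hi => ?_
          rw [← pow_sub_one_mul (by have := hm1 i hi; omega : m i ≠ 0)]
          ring
      _ = t := by rw [heval, mul_one]

end AlgClosed

theorem exists_linearIndepOn_iterate_and_eq_sum {K W : Type*} [DivisionRing K] [AddCommGroup W]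
    [Module K W] [FiniteDimensional K W] (f : W → W) (u : W) :
    ∃ (n : ℕ) (c : ℕ → K), LinearIndepOn K (fun i => f^[i] u) (range n : Set ℕ) ∧
      f^[n] u = ∑ i ∈ range n, c i • f^[i] u := by
  classical
  have hdep : ∃ n, ¬ LinearIndepOn K (fun i => f^[i] u) (range n : Set ℕ) := by
    refine ⟨finrank K W + 1, fun h => ?_⟩
    simpa using h.fintype_card_le_finrank
  obtain ⟨n, hn⟩ : ∃ n, Nat.find hdep = n + 1 := by
    refine Nat.exists_eq_add_one.mpr (Nat.pos_of_ne_zero fun h0 => ?_)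
    exact Nat.find_spec hdep (by rw [h0]; simp)
  have hind : LinearIndepOn K (fun i => f^[i] u) (range n : Set ℕ) :=
    not_not.mp (Nat.find_min hdep (by omega))
  have hspan := Nat.find_spec hdep
  rw [hn, range_add_one, coe_insert, linearIndepOn_insert (by simp), not_and_not_right] at hspan
  obtain ⟨c, hc⟩ := (mem_span_image_finset_iff_exists_fun' K).mp (hspan hind)
  exact ⟨n, c, hind, hc.symm⟩

theorem map_sum_smul_eq_self_of_recurrence {R M : Type*} [CommSemiring R] [AddCommMonoid M]
    [Module R M] {σ : R →+* R} (ψ : M →ₛₗ[σ] M) {w : ℕ → M} (hw : ∀ i, ψ (w i) = w (i + 1)) {m : ℕ}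
    {c a : ℕ → R} (hrel : w (m + 1) = ∑ i ∈ range (m + 1), c i • w i)
    (ha₀ : a 0 = c 0 * σ (a m)) (ha : ∀ i, a (i + 1) = σ (a i) + c (i + 1) * σ (a m)) :
    ψ (∑ i ∈ range (m + 1), a i • w i) = ∑ i ∈ range (m + 1), a i • w i := by
  simp only [map_sum, map_smulₛₗ, hw]
  rw [sum_range_succ, hrel, smul_sum, sum_range_succ' _ m, sum_range_succ' (fun i => a i • w i)]
  simp only [smul_smul, ha, ha₀, add_smul, sum_add_distrib, mul_comm (σ (a m))]
  abel

section FixedLine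

variable {k W : Type*} [Field k] [AddCommGroup W] [Module k W] {σ : k →+* k}
  {ψ : W →ₛₗ[σ] W} {v : W}

theorem span_singleton_le_comap_of_apply_eq_self (hv : ψ v = v) : k ∙ v ≤ (k ∙ v).comap ψ := by
  rw [span_singleton_le_iff_mem, mem_comap, hv]
  exact mem_span_singleton_self v

abbrev quotFixedLine (hv : ψ v = v) : (W ⧸ k ∙ v) →ₛₗ[σ] W ⧸ k ∙ v :=
  (k ∙ v).mapQ (k ∙ v) ψ (span_singleton_le_comap_of_apply_eq_self hv)

theorem exists_apply_sub_self_eq_of_mem_span (hσ : ∀ e, ∃ a, σ a - a = e) (hv : ψ v = v)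
    {x y : W} (h : ψ x - x - y ∈ k ∙ v) : ∃ x', ψ x' - x' = y ∧ x' - x ∈ k ∙ v := by
  obtain ⟨a, ha⟩ := mem_span_singleton.mp h
  obtain ⟨s, hs⟩ := hσ (-a)
  refine ⟨x + s • v, ?_, by simpa using smul_mem _ s (mem_span_singleton_self v)⟩
  calc ψ (x + s • v) - (x + s • v) = (ψ x - x - y) + (σ s - s) • v + y := by
        rw [map_add, map_smulₛₗ, hv, sub_smul]; abel
    _ = y := by rw [hs, ← ha, neg_smul, add_neg_cancel, zero_add]

theorem surjective_apply_sub_self_of_quotFixedLine (hσ : ∀ e, ∃ a, σ a - a = e)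
    (hv : ψ v = v) (hQ : Surjective fun z => quotFixedLine hv z - z) :
    Surjective fun x => ψ x - x := by
  intro y
  obtain ⟨z, hz⟩ := hQ (Submodule.Quotient.mk y)
  obtain ⟨x, rfl⟩ := Submodule.Quotient.mk_surjective _ z
  obtain ⟨x', hx', -⟩ := exists_apply_sub_self_eq_of_mem_span hσ hv (x := x) (y := y) <| by
    rwa [← Submodule.Quotient.mk_eq_zero, Submodule.Quotient.mk_sub, Submodule.Quotient.mk_sub,
      sub_eq_zero]
  exact ⟨x', hx'⟩

theorem injective_quotFixedLine (hσ : Surjective σ) (hψ : Injective ψ) (hv : ψ v = v) :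
    Injective (quotFixedLine hv) := by
  rw [injective_iff_map_eq_zero]
  intro z hz
  obtain ⟨x, rfl⟩ := Submodule.Quotient.mk_surjective _ z
  rw [mapQ_apply, Submodule.Quotient.mk_eq_zero, mem_span_singleton] at hz
  rw [Submodule.Quotient.mk_eq_zero, mem_span_singleton]
  obtain ⟨a, ha⟩ := hz
  obtain ⟨b, rfl⟩ := hσ a
  exact ⟨b, hψ (by rw [map_smulₛₗ, hv, ha])⟩

theorem card_fixed_eq_mul_card_fixed_quotFixedLine (hσ : ∀ e, ∃ a, σ a - a = e)
    (hv : ψ v = v) (hv0 : v ≠ 0) :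
    Nat.card {x // ψ x = x} =
      Nat.card {a // σ a = a} * Nat.card {z // quotFixedLine hv z = z} := by
  have hlift (z : {z // quotFixedLine hv z = z}) :
      ∃ x, ψ x = x ∧ Submodule.Quotient.mk x = z.1 := by
    obtain ⟨z, hz⟩ := z
    obtain ⟨x, rfl⟩ := Submodule.Quotient.mk_surjective _ z
    obtain ⟨x', hx', hxx'⟩ := exists_apply_sub_self_eq_of_mem_span hσ hv (x := x) (y := 0) <| by
      rwa [sub_zero, ← Submodule.Quotient.mk_eq_zero, Submodule.Quotient.mk_sub, sub_eq_zero]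
    exact ⟨x', sub_eq_zero.mp hx', (Submodule.Quotient.eq _).mpr hxx'⟩
  choose lift hlift_fixed hlift_mk using hlift
  have hline : ∀ a, ψ (a • v) = a • v ↔ σ a = a := fun a => by
    rw [map_smulₛₗ, hv, (smul_left_injective k hv0).eq_iff]
  let e : {a // σ a = a} × {z // quotFixedLine hv z = z} → {x // ψ x = x} := fun az =>
    ⟨az.1.1 • v + lift az.2, by rw [map_add, (hline _).mpr az.1.2, hlift_fixed]⟩
  have he : Bijective e := by
    constructor
    · rintro ⟨a, z⟩ ⟨b, z'⟩ h
      have hmk := congrArg (fun x : {x // ψ x = x} => Submodule.Quotient.mk (p := k ∙ v) x.1) h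
      have hz : z = z' := Subtype.ext <| by
        simpa [e, hlift_mk, (Submodule.Quotient.mk_eq_zero _).mpr
          (smul_mem _ _ (mem_span_singleton_self v))] using hmk
      subst hz
      have hab : a.1 • v = b.1 • v := by simpa [e] using congrArg Subtype.val h
      rw [Subtype.ext (smul_left_injective k hv0 hab)]
    · rintro ⟨x, hx⟩
      let z : {z // quotFixedLine hv z = z} := ⟨Submodule.Quotient.mk x, by simp [hx]⟩
      obtain ⟨a, ha⟩ := mem_span_singleton.mp ((Submodule.Quotient.eq _).mp (hlift_mk z).symm)
      refine ⟨(⟨a, (hline a).mp (by rw [ha, map_sub, hx, hlift_fixed])⟩, z), Subtype.ext ?_⟩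
      simp [e, ha]
  rw [← Nat.card_prod, Nat.card_congr (Equiv.ofBijective e he)]

end FixedLine

section Frobenius

variable {k : Type*} [Field k] [IsAlgClosed k] (p : ℕ) [Fact p.Prime] [CharP k p] {r : ℕ}

theorem exists_ne_zero_apply_eq_self_of_linearIndepOn (hr : 0 < r) {W : Type*} [AddCommGroup W]
    [Module k W] (ψ : W →ₛₗ[iterateFrobenius k p r] W) {w : ℕ → W}
    (hw : ∀ i, ψ (w i) = w (i + 1)) {m : ℕ} {c : ℕ → k}
    (hind : LinearIndepOn k w (range (m + 1) : Set ℕ))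
    (hrel : w (m + 1) = ∑ i ∈ range (m + 1), c i • w i) (hc : ∃ j ∈ range (m + 1), c j ≠ 0) :
    ∃ v ≠ 0, ψ v = v := by
  obtain ⟨q, hq_def⟩ : ∃ q, p ^ r = q := ⟨_, rfl⟩
  have hq : 1 < q := hq_def ▸ Nat.one_lt_pow hr.ne' (Fact.out : p.Prime).one_lt
  have hσq (x : k) : iterateFrobenius k p r x = x ^ q := hq_def ▸ iterateFrobenius_def p r x
  have hsum_pow (s : Finset ℕ) (f : ℕ → k) : (∑ j ∈ s, f j) ^ q = ∑ j ∈ s, f j ^ q := by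
    subst hq_def; exact sum_pow_char_pow p r s f
  obtain ⟨j, hj, hcj⟩ := hc
  obtain ⟨t, ht0, ht⟩ := exists_ne_zero_sum_mul_pow_eq_self (range (m + 1))
    (fun j => c j ^ q ^ (m - j)) (fun j => q * q ^ (m - j))
    (fun i hi j hj hij => by
      have := Nat.pow_right_injective hq (Nat.eq_of_mul_eq_mul_left (by omega) hij)
      simp only [coe_range, Set.mem_Iio] at hi hj
      omega)
    (fun j _ => one_lt_mul_of_lt_of_le hq (Nat.one_le_pow _ _ (by omega)))
    ⟨j, hj, pow_ne_zero _ hcj⟩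
  -- the solution of the recurrence in `map_sum_smul_eq_self_of_recurrence` with `a m = t`
  set a : ℕ → k := fun i => ∑ j ∈ range (i + 1), (c j * t ^ q) ^ q ^ (i - j)
  have ham : a m = t := by
    rw [← ht]
    exact sum_congr rfl fun j _ => by rw [mul_pow, ← pow_mul t]
  have ha : ∀ i, a (i + 1) = a i ^ q + c (i + 1) * t ^ q := by
    intro i
    simp only [a, sum_range_succ _ (i + 1), Nat.sub_self, pow_zero, pow_one, hsum_pow, ← pow_mul,
      ← pow_succ]
    congr 1
    refine sum_congr rfl fun j hj => ?_
    rw [Nat.sub_add_comm (by simpa [Nat.lt_succ_iff] using hj)]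
  refine ⟨∑ i ∈ range (m + 1), a i • w i, fun h0 => ht0 ?_, ?_⟩
  · rw [← ham]
    exact linearIndepOn_finset_iff.mp hind a h0 m (self_mem_range_succ m)
  · refine map_sum_smul_eq_self_of_recurrence ψ hw hrel ?_ ?_
    · simp [a, ham, hσq]
    · simpa [ham, hσq] using ha

theorem exists_ne_zero_apply_eq_self {W : Type*} [AddCommGroup W] [Module k W]
    [FiniteDimensional k W] [Nontrivial W] (hr : 0 < r)
    {ψ : W →ₛₗ[iterateFrobenius k p r] W} (hψ : Injective ψ) : ∃ v ≠ 0, ψ v = v := by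
  obtain ⟨u, hu⟩ := exists_ne (0 : W)
  have hw (i : ℕ) : ψ^[i] u ≠ 0 := (hψ.iterate i).ne_iff' (iterate_map_zero ψ i) |>.mpr hu
  obtain ⟨n, c, hind, hrel⟩ := exists_linearIndepOn_iterate_and_eq_sum (K := k) ψ u
  obtain ⟨m, rfl⟩ : ∃ m, n = m + 1 :=
    Nat.exists_eq_add_one.mpr <| Nat.pos_of_ne_zero fun h0 =>
      hw n (by rw [hrel, h0, sum_range_zero])
  refine exists_ne_zero_apply_eq_self_of_linearIndepOn p hr ψ
    (fun i => (iterate_succ_apply' ψ i u).symm) hind hrel ?_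
  by_contra! hc
  exact hw (m + 1) (hrel.trans <| sum_eq_zero fun j hj => by rw [hc j hj, zero_smul])

theorem surjective_apply_sub_self_and_card_fixed (hr : 0 < r) {W : Type*} [AddCommGroup W]
    [Module k W] [FiniteDimensional k W] (ψ : W →ₛₗ[iterateFrobenius k p r] W)
    (hψ : Injective ψ) :
    (Surjective fun x => ψ x - x) ∧ Nat.card {x // ψ x = x} = (p ^ r) ^ finrank k W := by
  have hq : 1 < p ^ r := Nat.one_lt_pow hr.ne' (Fact.out : p.Prime).one_lt
  have hσ (e : k) : ∃ a, iterateFrobenius k p r a - a = e := exists_pow_sub_self_eq hq e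
  induction hn : finrank k W generalizing W with
  | zero =>
    have := finrank_zero_iff.mp hn
    refine ⟨fun y => ⟨0, Subsingleton.elim _ _⟩, ?_⟩
    rw [pow_zero, Nat.card_eq_one_iff_unique]
    exact ⟨inferInstance, ⟨⟨0, map_zero ψ⟩⟩⟩
  | succ n ih =>
    have := nontrivial_of_finrank_eq_succ hn
    obtain ⟨v, hv0, hv⟩ := exists_ne_zero_apply_eq_self p hr hψ
    have hQ : finrank k (W ⧸ k ∙ v) = n := by
      have := (k ∙ v).finrank_quotient_add_finrank
      rw [finrank_span_singleton hv0] at this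
      omega
    obtain ⟨hsurj, hcard⟩ := ih (quotFixedLine hv)
      (injective_quotFixedLine (iterateFrobeniusEquiv k p r).surjective hψ hv) hQ
    refine ⟨surjective_apply_sub_self_of_quotFixedLine hσ hv hsurj, ?_⟩
    rw [card_fixed_eq_mul_card_fixed_quotFixedLine hσ hv hv0, hcard, pow_succ',
      ← card_pow_eq_self (k := k) p (dvd_pow_self p hr.ne') hq]
    rfl

end Frobenius

section Fitting

variable {R V F : Type*} [Ring R] [AddCommGroup V] [Module R V] [FunLike F V V]
  [AddMonoidHomClass F V V] (f : F)

theorem exists_apply_sub_self_eq_of_iterate_eq_zero {N : ℕ} {y : V} (hy : f^[N] y = 0) :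
    ∃ x, f x - x = y := by
  refine ⟨-∑ i ∈ range N, f^[i] y, ?_⟩
  have htel : f (∑ i ∈ range N, f^[i] y) - ∑ i ∈ range N, f^[i] y = -y := by
    rw [map_sum, ← sum_sub_distrib]
    simp only [← iterate_succ_apply' f]
    rw [sum_range_sub (fun i => f^[i] y), hy, iterate_zero_apply, zero_sub]
  rw [map_neg, neg_sub_neg, ← neg_sub, htel, neg_neg]

theorem surjective_apply_sub_self_of_codisjoint {A B : Submodule R V} (hAB : Codisjoint A B)
    (hA : ∀ y ∈ A, ∃ x, f x - x = y) (hB : ∀ y ∈ B, ∃ N, f^[N] y = 0) :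
    Surjective fun x => f x - x := by
  intro y
  obtain ⟨a, ha, b, hb, rfl⟩ := mem_sup.mp (hAB.eq_top ▸ mem_top : y ∈ A ⊔ B)
  obtain ⟨xa, rfl⟩ := hA a ha
  obtain ⟨N, hN⟩ := hB b hb
  obtain ⟨xb, rfl⟩ := exists_apply_sub_self_eq_of_iterate_eq_zero f hN
  exact ⟨xa + xb, by simp only [map_add]; abel⟩

theorem mem_of_apply_eq_self_of_isCompl {A B : Submodule R V} (hAB : IsCompl A B)
    (hA : ∀ x ∈ A, f x ∈ A) (hB : ∀ x ∈ B, f x ∈ B) (hnil : ∀ y ∈ B, ∃ N, f^[N] y = 0) {x : V}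
    (hx : f x = x) : x ∈ A := by
  obtain ⟨a, ha, b, hb, rfl⟩ := mem_sup.mp (hAB.sup_eq_top ▸ mem_top : x ∈ A ⊔ B)
  rw [map_add] at hx
  have hab : f a - a = b - f b := by rw [sub_eq_sub_iff_add_eq_add, hx, add_comm]
  have hfb : f b = b := by
    have := disjoint_def.mp hAB.disjoint _ (sub_mem (hA a ha) ha) (hab ▸ sub_mem hb (hB b hb))
    rw [hab, sub_eq_zero] at this
    exact this.symm
  obtain ⟨N, hN⟩ := hnil b hb
  rw [show b = 0 from hN ▸ (iterate_fixed hfb N).symm, add_zero]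
  exact ha

end Fitting

/-- Lang's lemma (Milne, Étale Cohomology III §4, Lemma 4.13): let `V` be a
finite-dimensional vector space over an algebraically closed field `k` of characteristic
`p`, and `φ : V → V` a `p^r`-semilinear map (additive, `φ(λx) = λ^{p^r} φ(x)`).  Given a
Fitting decomposition `V = V_ss ⊕ V_nil` where `φ` is bijective on `V_ss` and nilpotent
on `V_nil`, the map `φ − id` is surjective and its kernel is an `F_{p^r}`-vector space of
dimension `dim_k V_ss`, i.e. has cardinality `(p^r)^{dim_k V_ss}`. -/
theorem stmt7 (k : Type*) [Field k] [IsAlgClosed k] (p : ℕ) [Fact p.Prime] [CharP k p]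
    (r : ℕ) (hr : 0 < r)
    (V : Type*) [AddCommGroup V] [Module k V] [FiniteDimensional k V]
    (φ : V → V)
    (hadd : ∀ x y : V, φ (x + y) = φ x + φ y)
    (hsmul : ∀ (c : k) (x : V), φ (c • x) = c ^ (p ^ r) • φ x)
    (Vss Vnil : Submodule k V) (hcompl : IsCompl Vss Vnil)
    (hbij : Set.BijOn φ (Vss : Set V) (Vss : Set V))
    (hmaps : ∀ x ∈ Vnil, φ x ∈ Vnil)
    (hnil : ∃ N : ℕ, ∀ x ∈ Vnil, φ^[N] x = 0) :
    Function.Surjective (fun x : V => φ x - x) ∧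
    Nat.card {x : V // φ x = x} = (p ^ r) ^ (Module.finrank k Vss) := by
  let φL : V →ₛₗ[iterateFrobenius k p r] V :=
    { toFun := φ, map_add' := hadd, map_smul' := hsmul }
  let ψ : Vss →ₛₗ[iterateFrobenius k p r] Vss := φL.restrict hbij.mapsTo
  have hψ : Injective ψ := fun x y h =>
    Subtype.ext (hbij.injOn x.2 y.2 (congrArg Subtype.val h))
  obtain ⟨hsurj, hcard⟩ := surjective_apply_sub_self_and_card_fixed p hr ψ hψ
  obtain ⟨N, hN⟩ := hnil
  have hnil' : ∀ y ∈ Vnil, ∃ N, φL^[N] y = 0 := fun y hy => ⟨N, hN y hy⟩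
  refine ⟨surjective_apply_sub_self_of_codisjoint φL hcompl.codisjoint (fun y hy => ?_) hnil', ?_⟩
  · obtain ⟨x, hx⟩ := hsurj ⟨y, hy⟩
    exact ⟨x, congrArg Subtype.val hx⟩
  · rw [← hcard]
    refine Nat.card_congr ((Equiv.subtypeSubtypeEquivSubtype fun hx =>
      mem_of_apply_eq_self_of_isCompl φL hcompl hbij.mapsTo hmaps hnil' hx).symm.trans
      (Equiv.subtypeEquivRight fun _ => ⟨fun h => Subtype.ext h, congrArg Subtype.val⟩))
end

section
/- Let A be a d × d matrix over a field k of characteristic p, and let A^{(p^i)} denote the matrix obtained by raising all entries to the p^i-th power. Then the rank of the product A · A^{(p)} · A^{(p²)} ⋯ A^{(p^{d-1})} (the stable rank of A) equals the dimension of the semisimple part V_ss of the p-semilinear map φ : k^d → k^d, φ(x) = A · x^{(p)}, where x^{(p)} raises coordinates to the p-th power, provided k is perfect. -/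
/-!
Iterating `φ x = A x^{(p)}` gives `φ^[m] x = (A A^{(p)} ⋯ A^{(p^{m-1})}) x^{(p^m)}`, and on a
perfect field `x ↦ x^{(p^m)}` is onto, so `range φ^[m]` is the column space of that product.
These ranges decrease and, once two consecutive ones agree, stay constant; by dimension this
happens by step `d`. Since `φ` is additive, maps `V_ss` onto itself and `φ^[N]` kills `V_nil`,
the eventual range is `V_ss`.
-/

open Function Set Module

theorem Function.antitone_range_iterate {α : Type*} (f : α → α) :
    Antitone fun m => range f^[m] :=
  antitone_nat_of_succ_le fun m => by
    rw [iterate_succ]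
    exact range_comp_subset_range _ _

theorem Function.range_iterate_add_eq_of_succ_eq {α : Type*} {f : α → α} {m : ℕ}
    (h : range f^[m + 1] = range f^[m]) (j : ℕ) : range f^[m + j] = range f^[m] := by
  induction j with
  | zero => rfl
  | succ j ih =>
    rw [← add_assoc, iterate_succ', range_comp, ih, ← range_comp, ← iterate_succ', h]

theorem Submodule.exists_le_finrank_succ_eq_of_antitone {K V : Type*} [DivisionRing K]
    [AddCommGroup V] [Module K V] [FiniteDimensional K V] {S : ℕ → Submodule K V}
    (hS : Antitone S) : ∃ m ≤ finrank K V, S (m + 1) = S m := by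
  by_contra! h
  have hdrop : ∀ m ≤ finrank K V + 1, finrank K (S m) + m ≤ finrank K V := by
    intro m hm
    induction m with
    | zero => simpa using (S 0).finrank_le
    | succ m ih =>
      have hlt : finrank K (S (m + 1)) < finrank K (S m) :=
        Submodule.finrank_lt_finrank_of_lt ((hS (by omega)).lt_of_ne (h m (by omega)))
      have := ih (by omega)
      omega
  have := hdrop _ le_rfl
  omega

theorem Function.range_iterate_add_eq_of_finrank_le {K V : Type*} [DivisionRing K]
    [AddCommGroup V] [Module K V] [FiniteDimensional K V] {f : V → V} (S : ℕ → Submodule K V)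
    (hS : ∀ m, (S m : Set V) = range f^[m]) {n : ℕ} (hn : finrank K V ≤ n) (j : ℕ) :
    range f^[n + j] = range f^[n] := by
  have hanti : Antitone S := fun a b hab => by
    simpa only [← SetLike.coe_subset_coe, hS] using antitone_range_iterate f hab
  obtain ⟨m, hm, hstab⟩ := Submodule.exists_le_finrank_succ_eq_of_antitone hanti
  have hstab' := range_iterate_add_eq_of_succ_eq (f := f) (by rw [← hS, ← hS, hstab])
  obtain ⟨i, rfl⟩ := Nat.exists_eq_add_of_le (hm.trans hn)
  rw [add_assoc, hstab', hstab']

theorem AddMonoidHom.range_iterate_eq_of_bijOn {V : Type*} [AddZeroClass V] (f : V →+ V)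
    {U W : Set V} (hUW : ∀ x, ∃ u ∈ U, ∃ w ∈ W, u + w = x) (hbij : BijOn f U U) {N : ℕ}
    (hN : ∀ w ∈ W, f^[N] w = 0) {n : ℕ} (hn : N ≤ n) : Set.range f^[n] = U := by
  refine ((antitone_range_iterate f hn).trans ?_).antisymm fun u hu => ?_
  · rintro _ ⟨x, rfl⟩
    obtain ⟨u, hu, w, hw, rfl⟩ := hUW x
    rw [iterate_map_add, hN w hw, add_zero]
    exact hbij.mapsTo.iterate N hu
  · obtain ⟨x, -, hx⟩ := (hbij.iterate n).surjOn hu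
    exact ⟨x, hx⟩

namespace Matrix

variable {n R : Type*} [Fintype n] [CommSemiring R] (A : Matrix n n R) (p : ℕ)

section frobeniusMulVec

variable [ExpChar R p]

def frobeniusMulVec : (n → R) →+ (n → R) where
  toFun x := A *ᵥ fun i => x i ^ p
  map_zero' := by
    simp only [Pi.zero_apply, zero_pow (expChar_pos R p).ne']
    exact A.mulVec_zero
  map_add' x y := by
    simp only [Pi.add_apply, add_pow_expChar]
    exact A.mulVec_add _ _

theorem frobeniusMulVec_apply (x : n → R) : A.frobeniusMulVec p x = A *ᵥ fun i => x i ^ p :=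
  rfl

end frobeniusMulVec

variable [DecidableEq n]

def frobeniusTwistedPow (m : ℕ) : Matrix n n R :=
  ((List.range m).map fun i => A.map (· ^ p ^ i)).prod

theorem frobeniusTwistedPow_succ (m : ℕ) :
    A.frobeniusTwistedPow p (m + 1) = A.frobeniusTwistedPow p m * A.map (· ^ p ^ m) := by
  simp [frobeniusTwistedPow, List.range_succ]

variable [ExpChar R p]

theorem iterate_frobeniusMulVec (m : ℕ) (x : n → R) :
    (A.frobeniusMulVec p)^[m] x = A.frobeniusTwistedPow p m *ᵥ fun i => x i ^ p ^ m := by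
  induction m generalizing x with
  | zero => simp [frobeniusTwistedPow]
  | succ m ih =>
    have hpow : (fun i => A.frobeniusMulVec p x i ^ p ^ m)
        = A.map (· ^ p ^ m) *ᵥ fun i => x i ^ p ^ (m + 1) := by
      funext i
      rw [frobeniusMulVec_apply, ← iterateFrobenius_def (p := p), RingHom.map_mulVec]
      simp only [comp_def, iterateFrobenius_def, ← pow_mul, ← pow_succ']
      rfl
    rw [iterate_succ_apply, ih, hpow, mulVec_mulVec, frobeniusTwistedPow_succ]

theorem range_iterate_frobeniusMulVec [PerfectRing R p] (m : ℕ) :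
    range (A.frobeniusMulVec p)^[m] = LinearMap.range (A.frobeniusTwistedPow p m).mulVecLin := by
  have hsurj : Surjective fun (x : n → R) i => x i ^ p ^ m :=
    (iterateFrobeniusEquiv R p m).surjective.comp_left
  rw [show (A.frobeniusMulVec p)^[m] = (A.frobeniusTwistedPow p m).mulVecLin ∘ _ from
    funext (A.iterate_frobeniusMulVec p m), hsurj.range_comp, LinearMap.coe_range]

end Matrix

theorem stmt8_general (k : Type*) [Field k] (p : ℕ) [Fact p.Prime] [CharP k p] [PerfectRing k p]
    (d : ℕ) (A : Matrix (Fin d) (Fin d) k)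
    (φ : (Fin d → k) → (Fin d → k))
    (hφ : φ = fun x => A.mulVec (fun i => (x i) ^ p))
    (Vss Vnil : Submodule k (Fin d → k)) (hcompl : IsCompl Vss Vnil)
    (hbij : Set.BijOn φ (Vss : Set (Fin d → k)) (Vss : Set (Fin d → k)))
    (hnil : ∃ N : ℕ, ∀ x ∈ Vnil, φ^[N] x = 0) :
    ((List.range d).map (fun i => A.map (fun a => a ^ (p ^ i)))).prod.rank
      = Module.finrank k Vss := by
  obtain rfl : φ = A.frobeniusMulVec p := hφ
  obtain ⟨N, hN⟩ := hnil
  have hsum (x : Fin d → k) : ∃ u ∈ Vss, ∃ w ∈ Vnil, u + w = x :=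
    Submodule.mem_sup.mp (hcompl.sup_eq_top ▸ Submodule.mem_top)
  have hrange : range (A.frobeniusMulVec p)^[d] = Vss := by
    rw [← range_iterate_add_eq_of_finrank_le _
      (fun m => (A.range_iterate_frobeniusMulVec p m).symm) (finrank_fin_fun k).le N]
    exact (A.frobeniusMulVec p).range_iterate_eq_of_bijOn hsum hbij hN (by omega)
  show finrank k (LinearMap.range (A.frobeniusTwistedPow p d).mulVecLin) = _
  rw [SetLike.coe_injective ((A.range_iterate_frobeniusMulVec p d).symm.trans hrange)]

/-- Let `A` be a `d × d` matrix over a perfect field `k` of characteristic `p`, and let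
`A^{(p^i)}` denote the entrywise `p^i`-th power.  For the `p`-semilinear map
`φ(x) = A · x^{(p)}` on `k^d` with Fitting decomposition `k^d = V_ss ⊕ V_nil` (with `φ`
bijective on `V_ss` and nilpotent on `V_nil`), the rank of the product
`A · A^{(p)} · ⋯ · A^{(p^{d-1})}` (the stable rank of `A`) equals `dim_k V_ss`. -/
theorem stmt8 (k : Type*) [Field k] (p : ℕ) [Fact p.Prime] [CharP k p] [PerfectRing k p]
    (d : ℕ) (A : Matrix (Fin d) (Fin d) k)
    (φ : (Fin d → k) → (Fin d → k))
    (hφ : φ = fun x => A.mulVec (fun i => (x i) ^ p))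
    (Vss Vnil : Submodule k (Fin d → k)) (hcompl : IsCompl Vss Vnil)
    (hbij : Set.BijOn φ (Vss : Set (Fin d → k)) (Vss : Set (Fin d → k)))
    (hmaps : ∀ x ∈ Vnil, φ x ∈ Vnil)
    (hnil : ∃ N : ℕ, ∀ x ∈ Vnil, φ^[N] x = 0) :
    ((List.range d).map (fun i => A.map (fun a => a ^ (p ^ i)))).prod.rank
      = Module.finrank k Vss :=
  stmt8_general k p d A φ hφ Vss Vnil hcompl hbij hnil
end
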